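/- arXiv:2211.10507 — 6 statements merged into one kernel-verified Lean document; each statement's English description precedes it below -/
import Mathlib

section
/- Let S be a d×r real matrix such that A := S Sᵀ is invertible, and let v_i, v_j be two distinct columns of S. Then 1 − v_iᵀ A⁻¹ v_i ≥ 0, and |v_iᵀ A⁻¹ v_j| ≤ sqrt((1 − v_iᵀ A⁻¹ v_i)(1 − v_jᵀ A⁻¹ v_j)). -/
open Matrix

/-!
With `A = S Sᵀ`, the matrix `P = Sᵀ A⁻¹ S` is the orthogonal projection onto the row space of `S`,
and `P i j = v_iᵀ A⁻¹ v_j`. Hence `1 - P` is also an orthogonal projection, so positive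
semidefinite; its diagonal entries `1 - v_iᵀ A⁻¹ v_i` are nonnegative, and its `2 × 2` principal
minors are nonnegative, which for `i ≠ j` is the claimed Cauchy–Schwarz bound.
-/

namespace Matrix

variable {m n : Type*} [Fintype m]

theorem isStarProjection_conjTranspose_mul_inv_mul {K : Type*} [Field K] [StarRing K]
    [DecidableEq m] [Fintype n] (S : Matrix m n K) (hS : IsUnit (S * Sᴴ).det) :
    IsStarProjection (Sᴴ * (S * Sᴴ)⁻¹ * S) where
  isIdempotentElem :=
    calc Sᴴ * (S * Sᴴ)⁻¹ * S * (Sᴴ * (S * Sᴴ)⁻¹ * S)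
        = Sᴴ * (S * Sᴴ)⁻¹ * (S * Sᴴ * (S * Sᴴ)⁻¹) * S := by simp only [Matrix.mul_assoc]
      _ = Sᴴ * (S * Sᴴ)⁻¹ * S := by rw [mul_nonsing_inv _ hS, Matrix.mul_one]
  isSelfAdjoint := by
    rw [IsSelfAdjoint, star_eq_conjTranspose, conjTranspose_mul, conjTranspose_mul,
      conjTranspose_nonsing_inv, conjTranspose_mul, conjTranspose_conjTranspose, Matrix.mul_assoc]

open scoped MatrixOrder ComplexOrder in
theorem posSemidef_one_sub_conjTranspose_mul_inv_mul {𝕜 : Type*} [RCLike 𝕜] [DecidableEq m]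
    [Fintype n] [DecidableEq n] (S : Matrix m n 𝕜) (hS : IsUnit (S * Sᴴ).det) :
    (1 - Sᴴ * (S * Sᴴ)⁻¹ * S).PosSemidef :=
  nonneg_iff_posSemidef.mp (isStarProjection_conjTranspose_mul_inv_mul S hS).one_sub_nonneg

theorem PosSemidef.abs_apply_le_sqrt {Q : Matrix n n ℝ} (hQ : Q.PosSemidef) (i j : n) :
    |Q i j| ≤ √(Q i i * Q j j) := by
  have hminor := (hQ.submatrix ![i, j]).det_nonneg
  have hsymm : Q j i = Q i j := hQ.isHermitian.apply i j
  rw [det_fin_two] at hminor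
  simp only [submatrix_apply, Matrix.cons_val_zero, Matrix.cons_val_one, hsymm] at hminor
  exact Real.abs_le_sqrt (by nlinarith)

theorem transpose_mul_mul_apply {R : Type*} [CommSemiring R] (S : Matrix m n R)
    (M : Matrix m m R) (a b : n) :
    (Sᵀ * M * S) a b = (fun x => S x a) ⬝ᵥ M *ᵥ (fun x => S x b) := by
  rw [dotProduct_mulVec]
  rfl

end Matrix

theorem inner_product_bounds (d r : ℕ) (S : Matrix (Fin d) (Fin r) ℝ)
    (hA : IsUnit (S * Sᵀ).det) (i j : Fin r) (hij : i ≠ j) :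
    0 ≤ 1 - (fun x => S x i) ⬝ᵥ (S * Sᵀ)⁻¹.mulVec (fun x => S x i) ∧
    |(fun x => S x i) ⬝ᵥ (S * Sᵀ)⁻¹.mulVec (fun x => S x j)|
      ≤ Real.sqrt ((1 - (fun x => S x i) ⬝ᵥ (S * Sᵀ)⁻¹.mulVec (fun x => S x i))
          * (1 - (fun x => S x j) ⬝ᵥ (S * Sᵀ)⁻¹.mulVec (fun x => S x j))) := by
  simp only [← transpose_mul_mul_apply]
  set P := Sᵀ * (S * Sᵀ)⁻¹ * S
  have hQ : (1 - P).PosSemidef := by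
    simpa only [conjTranspose_eq_transpose_of_trivial] using
      posSemidef_one_sub_conjTranspose_mul_inv_mul S
        (by rwa [conjTranspose_eq_transpose_of_trivial])
  have hdiag (a : Fin r) : 1 - P a a = (1 - P) a a := by
    rw [Matrix.sub_apply, one_apply_eq]
  have hoff : P i j = -(1 - P) i j := by
    rw [Matrix.sub_apply, one_apply_ne hij, zero_sub, neg_neg]
  rw [hdiag, hdiag, hoff, abs_neg]
  exact ⟨hQ.diag_nonneg, hQ.abs_apply_le_sqrt i j⟩
end

section
/- Let S be a d×r real matrix such that A := S Sᵀ is invertible, and let Y be a d×m matrix whose columns are a subset of the columns of S. Then det(I_m − Yᵀ A⁻¹ Y) ≥ 0. -/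
/-!
`Q = Sᵀ (S Sᵀ)⁻¹ S` is the orthogonal projection onto the row space of `S`: it is symmetric and
idempotent, hence so is `1 - Q`, which is therefore positive semidefinite:
`1 - Q = (1 - Q)ᵀ (1 - Q)`.
Since `Y` consists of distinct columns of `S`, the matrix `1 - Yᵀ (S Sᵀ)⁻¹ Y` is a principal
submatrix of `1 - Q`, so it is positive semidefinite as well and its determinant is nonnegative.
-/

open Matrix

namespace Matrix

variable {m n R : Type*} [Fintype m] [Fintype n] [DecidableEq m] [CommRing R] [StarRing R]

theorem isIdempotentElem_conjTranspose_mul_nonsing_inv_mul (S : Matrix m n R)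
    (hS : IsUnit (S * Sᴴ).det) : IsIdempotentElem (Sᴴ * (S * Sᴴ)⁻¹ * S) :=
  calc Sᴴ * (S * Sᴴ)⁻¹ * S * (Sᴴ * (S * Sᴴ)⁻¹ * S)
      = Sᴴ * (S * Sᴴ)⁻¹ * ((S * Sᴴ) * (S * Sᴴ)⁻¹) * S := by simp only [Matrix.mul_assoc]
    _ = Sᴴ * (S * Sᴴ)⁻¹ * S := by rw [mul_nonsing_inv _ hS, Matrix.mul_one]

variable [PartialOrder R] [StarOrderedRing R]

theorem IsHermitian.posSemidef_of_isIdempotentElem {Q : Matrix n n R} (hQ : Q.IsHermitian)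
    (hQQ : IsIdempotentElem Q) : Q.PosSemidef := by
  have hQ_eq : Qᴴ * Q = Q := by rw [hQ.eq, hQQ.eq]
  exact hQ_eq ▸ posSemidef_conjTranspose_mul_self Q

theorem posSemidef_one_sub_conjTranspose_mul_nonsing_inv_mul [DecidableEq n] (S : Matrix m n R)
    (hS : IsUnit (S * Sᴴ).det) : (1 - Sᴴ * (S * Sᴴ)⁻¹ * S).PosSemidef :=
  have hQ : (Sᴴ * (S * Sᴴ)⁻¹ * S).IsHermitian :=
    isHermitian_conjTranspose_mul_mul S (isHermitian_mul_conjTranspose_self S).inv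
  (isHermitian_one.sub hQ).posSemidef_of_isIdempotentElem
    (isIdempotentElem_conjTranspose_mul_nonsing_inv_mul S hS).one_sub

end Matrix

theorem det_sub_columns_nonneg (d r m : ℕ) (S : Matrix (Fin d) (Fin r) ℝ)
    (hA : IsUnit (S * Sᵀ).det)
    (g : Fin m → Fin r) (hg : Function.Injective g)
    (Y : Matrix (Fin d) (Fin m) ℝ) (hY : Y = fun x k => S x (g k)) :
    0 ≤ (1 - Yᵀ * (S * Sᵀ)⁻¹ * Y).det := by
  have hY' : Y = S.submatrix id g := hY
  have hYAY : Yᵀ * (S * Sᵀ)⁻¹ * Y = (Sᵀ * (S * Sᵀ)⁻¹ * S).submatrix g g := by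
    rw [submatrix_mul _ _ g id g Function.bijective_id,
      submatrix_mul _ _ g id id Function.bijective_id, hY', transpose_submatrix, submatrix_id_id]
  have hproj := posSemidef_one_sub_conjTranspose_mul_nonsing_inv_mul S
    (by rwa [conjTranspose_eq_transpose_of_trivial])
  rw [conjTranspose_eq_transpose_of_trivial] at hproj
  rw [hYAY, ← submatrix_one g hg]
  exact (hproj.submatrix g).det_nonneg
end

section
/- Let A = S Sᵀ be positive definite where S is a d×r real matrix, and let u, v ∈ ℝ^d. Then det(A − vvᵀ + uuᵀ)/det(A) = (uᵀ A⁻¹ v)² + (1 + uᵀ A⁻¹ u)(1 − vᵀ A⁻¹ v). -/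
/-!
Write `A - v vᵀ + u uᵀ = A + U V` with `U = [u v]` and `V = [u, -v]ᵀ`. The generalized matrix
determinant lemma gives `det (A + U V) = det A · det (I₂ + V A⁻¹ U)`, and the right-hand side of
the theorem is the determinant of this `2 × 2` matrix once the symmetry of `A⁻¹` identifies
`vᵀ A⁻¹ u` with `uᵀ A⁻¹ v`.
-/

namespace Matrix

variable {n R : Type*} [CommRing R]

theorem transpose_of_mul_of_eq_vecMulVec_add (u v w z : n → R) :
    (of ![u, v])ᵀ * of ![w, z] = vecMulVec u w + vecMulVec v z := by
  ext i j
  simp [mul_apply, vecMulVec_apply, Fin.sum_univ_two]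

theorem of_mul_mul_transpose_of [Fintype n] (a b c e : n → R) (M : Matrix n n R) :
    of ![a, b] * M * (of ![c, e])ᵀ
      = !![a ⬝ᵥ M *ᵥ c, a ⬝ᵥ M *ᵥ e; b ⬝ᵥ M *ᵥ c, b ⬝ᵥ M *ᵥ e] := by
  ext i j
  rw [Matrix.mul_assoc]
  fin_cases i <;> fin_cases j <;> simp [mul_apply, dotProduct, mulVec]

theorem det_add_vecMulVec_add_vecMulVec [Fintype n] [DecidableEq n] {A : Matrix n n R}
    (hA : IsUnit A.det) (u w v z : n → R) :
    (A + vecMulVec u w + vecMulVec v z).det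
      = A.det * ((1 + w ⬝ᵥ A⁻¹ *ᵥ u) * (1 + z ⬝ᵥ A⁻¹ *ᵥ v)
          - (w ⬝ᵥ A⁻¹ *ᵥ v) * (z ⬝ᵥ A⁻¹ *ᵥ u)) := by
  rw [add_assoc, ← transpose_of_mul_of_eq_vecMulVec_add, det_add_mul _ _ hA,
    of_mul_mul_transpose_of, det_fin_two]
  simp

theorem IsSymm.dotProduct_mulVec_comm [Fintype n] {A : Matrix n n R} (hA : A.IsSymm)
    (u v : n → R) :
    v ⬝ᵥ A *ᵥ u = u ⬝ᵥ A *ᵥ v := by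
  rw [← hA.eq, dotProduct_transpose_mulVec, hA.eq]

end Matrix

open Matrix

theorem rank_two_det_update (d r : ℕ) (S : Matrix (Fin d) (Fin r) ℝ)
    (hA : (S * Sᵀ).PosDef) (u v : Fin d → ℝ) :
    (S * Sᵀ - vecMulVec v v + vecMulVec u u).det / (S * Sᵀ).det
      = (u ⬝ᵥ (S * Sᵀ)⁻¹.mulVec v) ^ 2
        + (1 + u ⬝ᵥ (S * Sᵀ)⁻¹.mulVec u) * (1 - v ⬝ᵥ (S * Sᵀ)⁻¹.mulVec v) := by
  have hdet : (S * Sᵀ).det ≠ 0 := hA.det_pos.ne'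
  have hsymm : (S * Sᵀ).IsSymm := by simp [IsSymm, transpose_mul]
  have hsplit : S * Sᵀ - vecMulVec v v + vecMulVec u u
      = S * Sᵀ + vecMulVec u u + vecMulVec v (-v) := by
    rw [vecMulVec_neg]; abel
  rw [hsplit, det_add_vecMulVec_add_vecMulVec (isUnit_iff_ne_zero.mpr hdet),
    mul_div_cancel_left₀ _ hdet, neg_dotProduct, neg_dotProduct,
    hsymm.inv.dotProduct_mulVec_comm u v]
  ring
end

section
/- Let A be an ℓ×ℓ positive definite real matrix, C an ℓ×ℓ positive semidefinite real matrix, and B an ℓ×ℓ real matrix. Then det([[A, B],[−Bᵀ, C]]) ≥ det(B)². -/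
/-! By the Schur complement, the determinant equals `det A * det (C + Bᵀ A⁻¹ B)`. The determinant is
monotone in the Loewner order on positive semidefinite matrices (conjugate by `(√P)⁻¹` to reduce to
`1 ≤ K`, where all eigenvalues are at least `1`), so this is at least
`det A * det (Bᵀ A⁻¹ B) = det B ^ 2`. -/

open Matrix

open scoped MatrixOrder

namespace Matrix

variable {n : Type*} [Fintype n] [DecidableEq n]

theorem one_le_det_of_one_le {K : Matrix n n ℝ} (hK : 1 ≤ K) : 1 ≤ K.det := by
  have hKsa : IsSelfAdjoint K := .of_nonneg (zero_le_one.trans hK)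
  rw [hKsa.isHermitian.det_eq_prod_eigenvalues]
  exact Finset.one_le_prod fun i _ ↦ (CFC.one_le_iff K).1 hK _
    (hKsa.isHermitian.eigenvalues_mem_spectrum_real i)

theorem det_le_det_of_le {P M : Matrix n n ℝ} (hP : 0 ≤ P) (hPM : P ≤ M) : P.det ≤ M.det := by
  by_cases hdet : P.det = 0
  · exact hdet ▸ (nonneg_iff_posSemidef.1 (hP.trans hPM)).det_nonneg
  have hPdef : P.PosDef := (nonneg_iff_posSemidef.1 hP).posDef_iff_det_ne_zero.2 hdet
  have hPpos : IsStrictlyPositive P := isStrictlyPositive_iff_posDef.2 hPdef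
  set S := CFC.sqrt P
  have hSS : S * S = P := CFC.sqrt_mul_sqrt_self P
  have hSdet : IsUnit S.det := by
    refine isUnit_iff_ne_zero.2 fun h ↦ hdet ?_
    rw [← hSS, det_mul, h, zero_mul]
  have hSinv : IsSelfAdjoint S⁻¹ := hPpos.sqrt.isSelfAdjoint.isHermitian.inv
  have hone : 1 ≤ S⁻¹ * M * S⁻¹ := by
    calc 1 = S⁻¹ * P * S⁻¹ := by
          rw [← hSS, Matrix.mul_assoc, Matrix.mul_assoc, mul_nonsing_inv _ hSdet, Matrix.mul_one,
            nonsing_inv_mul _ hSdet]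
      _ ≤ S⁻¹ * M * S⁻¹ := hSinv.conjugate_le_conjugate hPM
  have hdet_quot : (S⁻¹ * M * S⁻¹).det = M.det / P.det := by
    rw [← hSS, det_mul, det_mul, det_mul, det_nonsing_inv, Ring.inverse_eq_inv']
    field_simp
  exact (one_le_div hPdef.det_pos).1 (hdet_quot ▸ one_le_det_of_one_le hone)

end Matrix

theorem block_det_ge_det_sq (l : ℕ) (A C B : Matrix (Fin l) (Fin l) ℝ)
    (hA : A.PosDef) (hC : C.PosSemidef) :
    (Matrix.fromBlocks A B (-Bᵀ) C).det ≥ B.det ^ 2 := by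
  have := A.invertibleOfIsUnitDet hA.det_pos.ne'.isUnit
  set P := Bᵀ * A⁻¹ * B
  have hP : 0 ≤ P := by
    simpa only [conjTranspose_eq_transpose_of_trivial] using
      (hA.inv.posSemidef.conjTranspose_mul_mul_same B).nonneg
  have hschur : (fromBlocks A B (-Bᵀ) C).det = A.det * (C + P).det := by
    rw [det_fromBlocks₁₁, invOf_eq_nonsing_inv, Matrix.neg_mul, Matrix.neg_mul, sub_neg_eq_add]
  have hdetP : A.det * P.det = B.det ^ 2 := by
    rw [det_mul, det_mul, det_transpose, det_nonsing_inv, Ring.inverse_eq_inv']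
    field_simp [hA.det_pos.ne']
  calc B.det ^ 2 = A.det * P.det := hdetP.symm
    _ ≤ A.det * (C + P).det := by
      gcongr
      · exact hA.det_pos.le
      · exact det_le_det_of_le hP (le_add_of_nonneg_left hC.nonneg)
    _ = (fromBlocks A B (-Bᵀ) C).det := hschur.symm
end

section
/- Let S, T be d×r real matrices with S Sᵀ positive definite, and suppose T Tᵀ = S Sᵀ − V_Y V_Yᵀ + V_X V_Xᵀ where V_X, V_Y are d×ℓ matrices with I_ℓ − V_Yᵀ(S Sᵀ)⁻¹V_Y positive semidefinite. Then det(T Tᵀ) ≥ det(S Sᵀ) · det(V_Xᵀ (S Sᵀ)⁻¹ V_Y)². -/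
/-!
With `A = S Sᵀ`, the matrix determinant lemma turns `det (T Tᵀ)` into `det A` times the determinant
of the `2ℓ × 2ℓ` block matrix `[[1 + P, G], [-Gᵀ, 1 - Q]]`, where `P = V_Xᵀ A⁻¹ V_X`,
`G = V_Xᵀ A⁻¹ V_Y` and `Q = V_Yᵀ A⁻¹ V_Y`. The Schur complement of the positive definite block
`1 + P` is `(1 - Q) + Gᵀ (1 + P)⁻¹ G`, a sum of two positive semidefinite matrices, and adding a
positive semidefinite matrix cannot decrease the determinant. Hence the block determinant is at
least `det (1 + P) * det (Gᵀ (1 + P)⁻¹ G) = (det G)²`.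
-/

open Matrix

namespace Matrix

variable {m n k : Type*} [Fintype m] [Fintype n] [Fintype k] [DecidableEq m] [DecidableEq n]
  [DecidableEq k]

theorem det_sub_mul_add_mul {α : Type*} [CommRing α] {A : Matrix m m α} (hA : IsUnit A.det)
    (U₁ : Matrix m n α) (V₁ : Matrix n m α) (U₂ : Matrix m k α) (V₂ : Matrix k m α) :
    (A - U₂ * V₂ + U₁ * V₁).det = A.det * (fromBlocks (1 + V₁ * A⁻¹ * U₁) (V₁ * A⁻¹ * U₂)
      (-(V₂ * A⁻¹ * U₁)) (1 - V₂ * A⁻¹ * U₂)).det := by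
  have hsplit : A - U₂ * V₂ + U₁ * V₁ = A + fromCols U₁ U₂ * fromRows V₁ (-V₂) := by
    rw [fromCols_mul_fromRows, Matrix.mul_neg]; abel
  rw [hsplit, det_add_mul _ _ hA, fromRows_mul, fromRows_mul_fromCols, ← fromBlocks_one,
    fromBlocks_add]
  simp only [Matrix.neg_mul, ← sub_eq_add_neg, zero_add, zero_sub]

variable {𝕜 : Type*} [RCLike 𝕜]

open scoped ComplexOrder

lemma PosSemidef.one_le_det_one_add {N : Matrix n n 𝕜} (hN : N.PosSemidef) : 1 ≤ (1 + N).det := by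
  rw [hN.1.spectral_theorem, Unitary.conjStarAlgAut_apply, Matrix.mul_assoc,
    det_one_add_mul_comm, Matrix.mul_assoc, Unitary.coe_star_mul_self, Matrix.mul_one,
    ← diagonal_one, diagonal_add, det_diagonal]
  refine Finset.one_le_prod fun i _ => ?_
  simpa using hN.eigenvalues_nonneg i

open scoped MatrixOrder in
lemma PosSemidef.det_le_det_add {A B : Matrix n n 𝕜} (hA : A.PosSemidef) (hB : B.PosSemidef) :
    A.det ≤ (A + B).det := by
  rcases eq_or_ne A.det 0 with hA0 | hA0
  · exact hA0 ▸ (hA.add hB).det_nonneg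
  obtain ⟨C, rfl⟩ := CStarAlgebra.nonneg_iff_eq_star_mul_self.mp hB.nonneg
  have hCAC : (C * A⁻¹ * Cᴴ).PosSemidef := hA.inv.mul_mul_conjTranspose_same C
  rw [star_eq_conjTranspose, det_add_mul _ _ hA0.isUnit]
  exact le_mul_of_one_le_right hA.det_nonneg hCAC.one_le_det_one_add

lemma PosDef.star_det_mul_det_le_det_fromBlocks {M N G : Matrix n n 𝕜} (hM : M.PosDef)
    (hN : N.PosSemidef) : star G.det * G.det ≤ (fromBlocks M G (-Gᴴ) N).det := by
  have : Invertible M := hM.isUnit.invertible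
  have hschur : N - -Gᴴ * ⅟M * G = Gᴴ * M⁻¹ * G + N := by
    rw [invOf_eq_nonsing_inv, Matrix.neg_mul, Matrix.neg_mul, sub_neg_eq_add, add_comm]
  have hdet : M.det * (Gᴴ * M⁻¹ * G).det = star G.det * G.det := by
    rw [det_mul, det_mul, det_conjTranspose, det_nonsing_inv, Ring.inverse_eq_inv]
    field_simp [hM.det_pos.ne']
  rw [det_fromBlocks₁₁, hschur, ← hdet]
  exact mul_le_mul_of_nonneg_left
    ((hM.inv.posSemidef.conjTranspose_mul_mul_same G).det_le_det_add hN) hM.det_pos.le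

end Matrix

theorem swap_det_lower_bound (d r l : ℕ) (S T : Matrix (Fin d) (Fin r) ℝ)
    (hS : (S * Sᵀ).PosDef)
    (VX VY : Matrix (Fin d) (Fin l) ℝ)
    (hT : T * Tᵀ = S * Sᵀ - VY * VYᵀ + VX * VXᵀ)
    (hY : (1 - VYᵀ * (S * Sᵀ)⁻¹ * VY).PosSemidef) :
    (T * Tᵀ).det ≥ (S * Sᵀ).det * (VXᵀ * (S * Sᵀ)⁻¹ * VY).det ^ 2 := by
  set A := S * Sᵀ
  have hX : (1 + VXᵀ * A⁻¹ * VX).PosDef := by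
    simpa [conjTranspose_eq_transpose_of_trivial] using
      PosDef.one.add_posSemidef (hS.inv.posSemidef.conjTranspose_mul_mul_same VX)
  have hYX : VYᵀ * A⁻¹ * VX = (VXᵀ * A⁻¹ * VY)ᴴ := by
    simp [A, Matrix.mul_assoc, transpose_nonsing_inv]
  rw [hT, det_sub_mul_add_mul hS.det_pos.ne'.isUnit, hYX, ge_iff_le, sq]
  exact mul_le_mul_of_nonneg_left (hX.star_det_mul_det_le_det_fromBlocks hY) hS.det_pos.le
end

section
/- Let A be a d×d positive definite matrix and u, v ∈ ℝ^d with (1 + uᵀA⁻¹u)(1 − vᵀA⁻¹v) + (uᵀA⁻¹v)² > 0. Let B = A + uuᵀ − vvᵀ. Then B is invertible and B⁻¹ − A⁻¹ = −a⁻² [ (1 − vᵀA⁻¹v)·A⁻¹uuᵀA⁻¹ + (uᵀA⁻¹v)·A⁻¹vuᵀA⁻¹ + (uᵀA⁻¹v)·A⁻¹uvᵀA⁻¹ − (1 + uᵀA⁻¹u)·A⁻¹vvᵀA⁻¹ ], where a² = (1 + uᵀA⁻¹u)(1 − vᵀA⁻¹v) + (uᵀA⁻¹v)². -/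
/-!
Write `B = A + Wᵀ J W`, where `W` has rows `u, v` and `J = diag(1, -1)`. The Woodbury identity
reduces inverting `B` to inverting the `2 × 2` capacitance matrix
`J⁻¹ + W A⁻¹ Wᵀ = !![1 + uᵀA⁻¹u, uᵀA⁻¹v; uᵀA⁻¹v, vᵀA⁻¹v - 1]` (symmetric because `A` is), whose
determinant is `-a²`; its adjugate supplies the four coefficients of the formula.
-/

open Matrix

namespace Matrix

variable {α K m n : Type*}

theorem transpose_of_mul_mul_of [CommSemiring α] [Fintype m] [Fintype n]
    (w : m → n → α) (M : Matrix m m α) :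
    (of w)ᵀ * M * of w = ∑ k, ∑ l, M k l • vecMulVec (w k) (w l) := by
  ext i j
  simp only [mul_apply, transpose_apply, of_apply, sum_apply, smul_apply, vecMulVec_apply,
    smul_eq_mul, Finset.sum_mul]
  rw [Finset.sum_comm]
  exact Finset.sum_congr rfl fun _ _ => Finset.sum_congr rfl fun _ _ => by ring

theorem mul_transpose_of_mul_mul_of_mul [CommSemiring α] [Fintype m] [Fintype n]
    (w : m → n → α) (M : Matrix m m α) (P Q : Matrix n n α) :
    P * (of w)ᵀ * M * of w * Q = ∑ k, ∑ l, M k l • (P * vecMulVec (w k) (w l) * Q) := by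
  rw [Matrix.mul_assoc P, Matrix.mul_assoc P, transpose_of_mul_mul_of]
  simp only [Finset.mul_sum, Finset.sum_mul, Matrix.mul_smul, Matrix.smul_mul]

theorem of_mul_mul_transpose_of_apply [CommSemiring α] [Fintype n]
    (w : m → n → α) (M : Matrix n n α) (k l : m) :
    (of w * M * (of w)ᵀ) k l = w k ⬝ᵥ M *ᵥ w l := by
  simp only [mul_apply, transpose_apply, of_apply, dotProduct, mulVec, Finset.mul_sum,
    Finset.sum_mul]
  rw [Finset.sum_comm]
  exact Finset.sum_congr rfl fun _ _ => Finset.sum_congr rfl fun _ _ => by ring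

theorem dotProduct_mulVec_comm_of_isSymm [CommSemiring α] [Fintype m] {M : Matrix m m α}
    (hM : M.IsSymm) (x y : m → α) : x ⬝ᵥ M *ᵥ y = y ⬝ᵥ M *ᵥ x := by
  rw [dotProduct_mulVec, dotProduct_comm, ← vecMul_transpose, hM.eq]

theorem isUnit_add_mul_mul [CommRing α] [Fintype m] [DecidableEq m] [Fintype n] [DecidableEq n]
    {A : Matrix n n α} {U : Matrix n m α} {C : Matrix m m α} {V : Matrix m n α}
    (hA : IsUnit A) (hC : IsUnit C) (hAC : IsUnit (C⁻¹ + V * A⁻¹ * U)) :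
    IsUnit (A + U * C * V) := by
  obtain ⟨_⟩ := hA.nonempty_invertible
  obtain ⟨_⟩ := hC.nonempty_invertible
  obtain ⟨iAC⟩ := hAC.nonempty_invertible
  simp only [← invOf_eq_nonsing_inv] at iAC
  let := invertibleAddMulMul A U C V
  exact isUnit_of_invertible _

theorem inv_fin_two_of [Field K] (a b c d : K) :
    !![a, b; c, d]⁻¹ = (a * d - b * c)⁻¹ • !![d, -b; -c, a] := by
  rw [inv_def, det_fin_two_of, adjugate_fin_two_of, Ring.inverse_eq_inv']

variable [Field K] [Fintype n]

theorem add_vecMulVec_sub_vecMulVec_eq (A : Matrix n n K) (u v : n → K) :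
    A + vecMulVec u u - vecMulVec v v
      = A + (of ![u, v])ᵀ * diagonal ![(1 : K), -1] * of ![u, v] := by
  rw [transpose_of_mul_mul_of]
  simp [Fin.sum_univ_two, sub_eq_add_neg, add_assoc]

variable [DecidableEq n]

theorem inv_diagonal_add_of_mul_inv_mul_transpose_of {A : Matrix n n K} (hA : A.IsSymm)
    (u v : n → K) :
    (diagonal ![1, -1])⁻¹ + of ![u, v] * A⁻¹ * (of ![u, v])ᵀ
      = !![1 + u ⬝ᵥ A⁻¹ *ᵥ u, u ⬝ᵥ A⁻¹ *ᵥ v; u ⬝ᵥ A⁻¹ *ᵥ v, v ⬝ᵥ A⁻¹ *ᵥ v - 1] := by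
  have hJ : (diagonal ![(1 : K), -1])⁻¹ = diagonal ![1, -1] :=
    inv_eq_left_inv (by ext i j; fin_cases i <;> fin_cases j <;> simp)
  ext k l
  rw [hJ, add_apply, of_mul_mul_transpose_of_apply]
  fin_cases k <;> fin_cases l <;>
    simp [dotProduct_mulVec_comm_of_isSymm hA.inv v u, sub_eq_neg_add]

theorem inv_add_vecMulVec_sub_vecMulVec {A : Matrix n n K} (hA : IsUnit A) (hAs : A.IsSymm)
    (u v : n → K)
    (ha : (1 + u ⬝ᵥ A⁻¹ *ᵥ u) * (1 - v ⬝ᵥ A⁻¹ *ᵥ v) + (u ⬝ᵥ A⁻¹ *ᵥ v) ^ 2 ≠ 0) :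
    IsUnit (A + vecMulVec u u - vecMulVec v v) ∧
    (A + vecMulVec u u - vecMulVec v v)⁻¹ - A⁻¹ =
      -(((1 + u ⬝ᵥ A⁻¹ *ᵥ u) * (1 - v ⬝ᵥ A⁻¹ *ᵥ v) + (u ⬝ᵥ A⁻¹ *ᵥ v) ^ 2)⁻¹) •
        ((1 - v ⬝ᵥ A⁻¹ *ᵥ v) • (A⁻¹ * vecMulVec u u * A⁻¹)
          + (u ⬝ᵥ A⁻¹ *ᵥ v) • (A⁻¹ * vecMulVec v u * A⁻¹)
          + (u ⬝ᵥ A⁻¹ *ᵥ v) • (A⁻¹ * vecMulVec u v * A⁻¹)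
          - (1 + u ⬝ᵥ A⁻¹ *ᵥ u) • (A⁻¹ * vecMulVec v v * A⁻¹)) := by
  have hdet : (1 + u ⬝ᵥ A⁻¹ *ᵥ u) * (v ⬝ᵥ A⁻¹ *ᵥ v - 1) - u ⬝ᵥ A⁻¹ *ᵥ v * u ⬝ᵥ A⁻¹ *ᵥ v
      = -((1 + u ⬝ᵥ A⁻¹ *ᵥ u) * (1 - v ⬝ᵥ A⁻¹ *ᵥ v) + (u ⬝ᵥ A⁻¹ *ᵥ v) ^ 2) := by ring
  have hJ : IsUnit (diagonal ![(1 : K), -1]) := by simp [isUnit_iff_isUnit_det]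
  have hcap := inv_diagonal_add_of_mul_inv_mul_transpose_of hAs u v
  have hcap_unit : IsUnit ((diagonal ![1, -1])⁻¹ + of ![u, v] * A⁻¹ * (of ![u, v])ᵀ) := by
    rw [hcap, isUnit_iff_isUnit_det, det_fin_two_of, hdet, isUnit_iff_ne_zero, neg_ne_zero]
    exact ha
  rw [add_vecMulVec_sub_vecMulVec_eq]
  refine ⟨isUnit_add_mul_mul hA hJ hcap_unit, ?_⟩
  rw [add_mul_mul_inv_eq_sub _ _ _ _ hA hJ hcap_unit, hcap, inv_fin_two_of, hdet, inv_neg,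
    mul_transpose_of_mul_mul_of_mul]
  simp only [Fin.sum_univ_two, smul_apply, of_apply, cons_val', cons_val_zero, cons_val_one,
    empty_val', cons_val_fin_one, smul_eq_mul]
  module

end Matrix

theorem rank_two_woodbury (d : ℕ) (A : Matrix (Fin d) (Fin d) ℝ) (hA : A.PosDef)
    (u v : Fin d → ℝ)
    (ha : 0 < (1 + u ⬝ᵥ A⁻¹.mulVec u) * (1 - v ⬝ᵥ A⁻¹.mulVec v)
            + (u ⬝ᵥ A⁻¹.mulVec v) ^ 2) :
    IsUnit (A + vecMulVec u u - vecMulVec v v).det ∧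
    (A + vecMulVec u u - vecMulVec v v)⁻¹ - A⁻¹ =
      -(((1 + u ⬝ᵥ A⁻¹.mulVec u) * (1 - v ⬝ᵥ A⁻¹.mulVec v)
          + (u ⬝ᵥ A⁻¹.mulVec v) ^ 2)⁻¹) •
        ((1 - v ⬝ᵥ A⁻¹.mulVec v) • (A⁻¹ * vecMulVec u u * A⁻¹)
          + (u ⬝ᵥ A⁻¹.mulVec v) • (A⁻¹ * vecMulVec v u * A⁻¹)
          + (u ⬝ᵥ A⁻¹.mulVec v) • (A⁻¹ * vecMulVec u v * A⁻¹)
          - (1 + u ⬝ᵥ A⁻¹.mulVec u) • (A⁻¹ * vecMulVec v v * A⁻¹)) := by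
  have hsymm : A.IsSymm := isHermitian_iff_isSymm.mp hA.isHermitian
  obtain ⟨hB, hformula⟩ := inv_add_vecMulVec_sub_vecMulVec hA.isUnit hsymm u v ha.ne'
  exact ⟨(isUnit_iff_isUnit_det _).mp hB, hformula⟩
end
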